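/- Let G be a cycle of cliques C_1, C_2, …, C_k with k ≥ 3, and suppose there is a vertex x ∈ V(C_1) contained in no other clique C_i (i ≠ 1) and a vertex y ∈ V(C_k) contained in no other clique C_i (i ≠ k). Then Z_+(G) = |V(G)| − k, and there is an optimal positive zero forcing set of size |V(G)| − k admitting a positive zero forcing process with exactly one non-trivial forcing tree. -/

import Mathlib

/-! Basic definitions for zero forcing and positive (semidefinite) zero forcing. -/

variable {V : Type*}

/-- The standard zero forcing colour change rule: a black vertex `u` (i.e. `u ∈ S`)
forces its unique white neighbour `w`. -/
def ZFForce (G : SimpleGraph V) (S : Set V) (u w : V) : Prop :=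
  u ∈ S ∧ w ∉ S ∧ G.Adj u w ∧ ∀ x, G.Adj u x → x ∉ S → x = w

/-- `x` and `y` are joined by a path of `G` all of whose vertices avoid `S`,
i.e. they lie in the same connected component of `G − S`. -/
def ConnOutside (G : SimpleGraph V) (S : Set V) : V → V → Prop :=
  Relation.ReflTransGen fun x y => x ∉ S ∧ y ∉ S ∧ G.Adj x y

/-- The positive (semidefinite) colour change rule: a black vertex `u` forces a white
neighbour `w` provided `w` is the only white neighbour of `u` lying in the connected
component of `G − S` containing `w`. -/
def PSDForce (G : SimpleGraph V) (S : Set V) (u w : V) : Prop :=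
  u ∈ S ∧ w ∉ S ∧ G.Adj u w ∧
    ∀ x, G.Adj u x → x ∉ S → ConnOutside G S x w → x = w

/-- A list of forces, applied in order starting with black set `S`, is a valid sequence
of applications of the standard colour change rule. -/
def ZFValid (G : SimpleGraph V) : Set V → List (V × V) → Prop
  | _, [] => True
  | S, p :: L => ZFForce G S p.1 p.2 ∧ ZFValid G (insert p.2 S) L

/-- A list of forces, applied in order starting with black set `S`, is a valid sequence
of applications of the positive colour change rule. -/
def PSDValid (G : SimpleGraph V) : Set V → List (V × V) → Prop
  | _, [] => True
  | S, p :: L => PSDForce G S p.1 p.2 ∧ PSDValid G (insert p.2 S) L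

/-- The black set resulting from performing the given list of forces. -/
def applyForces (S : Set V) (L : List (V × V)) : Set V :=
  L.foldl (fun T p => insert p.2 T) S

/-- `B` is a zero forcing set: repeatedly applying the colour change rule starting from
`B` colours every vertex black. -/
def IsZeroForcingSet (G : SimpleGraph V) (B : Set V) : Prop :=
  ∃ L : List (V × V), ZFValid G B L ∧ applyForces B L = Set.univ

/-- `B` is a positive zero forcing set. -/
def IsPSDForcingSet (G : SimpleGraph V) (B : Set V) : Prop :=
  ∃ L : List (V × V), PSDValid G B L ∧ applyForces B L = Set.univ

/-- The zero forcing number `Z(G)`. -/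
noncomputable def zfNum (G : SimpleGraph V) : ℕ :=
  sInf {n | ∃ B : Set V, B.ncard = n ∧ IsZeroForcingSet G B}

/-- The positive (semidefinite) zero forcing number `Z₊(G)`. -/
noncomputable def psdNum (G : SimpleGraph V) : ℕ :=
  sInf {n | ∃ B : Set V, B.ncard = n ∧ IsPSDForcingSet G B}

/-- A clique cover of `G`: a finite family of cliques covering every edge of `G`. -/
def IsCliqueCover (G : SimpleGraph V) (𝒞 : Finset (Set V)) : Prop :=
  (∀ C ∈ 𝒞, G.IsClique C) ∧ ∀ u v, G.Adj u v → ∃ C ∈ 𝒞, u ∈ C ∧ v ∈ C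

/-- The clique cover number `cc(G)`. -/
noncomputable def ccNum (G : SimpleGraph V) : ℕ :=
  sInf {n | ∃ 𝒞 : Finset (Set V), 𝒞.card = n ∧ IsCliqueCover G 𝒞}

/-- A tree cover of `G`: a family of vertex-disjoint induced subtrees whose vertex sets
partition `V(G)`. -/
def IsTreeCover (G : SimpleGraph V) (𝒯 : Finset (Set V)) : Prop :=
  (∀ S ∈ 𝒯, (G.induce S).IsTree) ∧
    (∀ S ∈ 𝒯, ∀ T ∈ 𝒯, S ≠ T → Disjoint S T) ∧
    ∀ v : V, ∃ S ∈ 𝒯, v ∈ S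

/-- The tree cover number `T(G)`. -/
noncomputable def tcNum (G : SimpleGraph V) : ℕ :=
  sInf {n | ∃ 𝒯 : Finset (Set V), 𝒯.card = n ∧ IsTreeCover G 𝒯}

/-- A graph is chordal if it contains no induced cycle on four or more vertices. -/
def IsChordal (G : SimpleGraph V) : Prop :=
  ∀ n, 4 ≤ n → IsEmpty (SimpleGraph.cycleGraph n ↪g G)

/-- `C` is a maximal clique of `G`. -/
def IsMaxClique (G : SimpleGraph V) (C : Set V) : Prop :=
  G.IsClique C ∧ ∀ D : Set V, G.IsClique D → C ⊆ D → C = D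

/-- A chordal graph is non-trivial if it has at least two distinct maximal cliques. -/
def NonTrivialChordal (G : SimpleGraph V) : Prop :=
  IsChordal G ∧ ∃ C₁ C₂ : Set V, IsMaxClique G C₁ ∧ IsMaxClique G C₂ ∧ C₁ ≠ C₂

/-- A vertex is simplicial if its neighbourhood induces a clique. -/
def IsSimplicial (G : SimpleGraph V) (v : V) : Prop :=
  G.IsClique (G.neighborSet v)

/-- `G` is a cycle of cliques `C 1, C 2, …, C k` (indexed cyclically by `ZMod k`):
the `C i` are distinct maximal cliques covering all edges of `G`, and two distinct
cliques intersect exactly when they are cyclically consecutive. -/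
def IsCycleOfCliques (G : SimpleGraph V) (k : ℕ) (C : ZMod k → Set V) : Prop :=
  Function.Injective C ∧
    (∀ i, IsMaxClique G (C i)) ∧
    (∀ u v, G.Adj u v → ∃ i, u ∈ C i ∧ v ∈ C i) ∧
    ∀ i j : ZMod k, i ≠ j → ((C i ∩ C j).Nonempty ↔ (j = i + 1 ∨ i = j + 1))

/-!
Lower bound: once a force happens inside a clique, the positive colour change rule leaves no
white vertex in that clique, so each of the `k` cliques hosts at most one force and at most `k`
vertices are forced.

Upper bound: vertices `e i ∈ C i ∩ C (i + 1)` lying in no other clique give an induced path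
`x, e 1, …, e (k - 1), y`; whitening all of it but `x`, the vertex `x` forces along the path.
For `k ≥ 4` every vertex of `C i ∩ C (i + 1)` qualifies. For `k = 3` the only obstruction is a
vertex lying in all three cliques; it is the centre of an induced claw, and the positive rule
lets it force its two leaves `x` and `y` at once.
-/

theorem applyForces_eq_union (S : Set V) (L : List (V × V)) :
    applyForces S L = S ∪ {v | ∃ p ∈ L, p.2 = v} := by
  induction L generalizing S with
  | nil => simp [applyForces]
  | cons p L ih =>
    change applyForces (insert p.2 S) L = _
    ext v
    simp [ih, or_left_comm, or_assoc, eq_comm]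

/-- A second white vertex of `K` would be a white neighbour of `u` in the component of `w`. -/
theorem PSDForce.subset_insert_of_isClique {G : SimpleGraph V} {S K : Set V} {u w : V}
    (h : PSDForce G S u w) (hK : G.IsClique K) (hu : u ∈ K) (hw : w ∈ K) :
    K ⊆ insert w S := by
  obtain ⟨huS, hwS, -, hforce⟩ := h
  intro v hv
  by_contra hvw
  rw [Set.mem_insert_iff, not_or] at hvw
  have hvu : u ≠ v := by rintro rfl; exact hvw.2 huS
  exact hvw.1 <| hforce v (hK hu hv hvu) hvw.2
    (.single ⟨hvw.2, hwS, hK hv hw hvw.1⟩)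

namespace PSDValid

variable {G : SimpleGraph V} {S : Set V} {L : List (V × V)}

theorem snd_notMem (h : PSDValid G S L) : ∀ p ∈ L, p.2 ∉ S := by
  induction L generalizing S with
  | nil => simp
  | cons a L ih =>
    exact List.forall_mem_cons.2
      ⟨h.1.2.1, fun p hp hpS => ih h.2 p hp (Set.mem_insert_of_mem _ hpS)⟩

theorem adj (h : PSDValid G S L) : ∀ p ∈ L, G.Adj p.1 p.2 := by
  induction L generalizing S with
  | nil => simp
  | cons a L ih => exact List.forall_mem_cons.2 ⟨h.1.2.2.1, ih h.2⟩

theorem eq_of_mem_isClique {K : Set V} (h : PSDValid G S L) (hK : G.IsClique K) :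
    ∀ p ∈ L, ∀ r ∈ L, p.1 ∈ K → p.2 ∈ K → r.1 ∈ K → r.2 ∈ K → p = r := by
  induction L generalizing S with
  | nil => simp
  | cons a L ih =>
    have hlater : ∀ r ∈ L, a.1 ∈ K → a.2 ∈ K → r.2 ∉ K := fun r hr ha1 ha2 hr2 =>
      h.2.snd_notMem r hr (h.1.subset_insert_of_isClique hK ha1 ha2 hr2)
    intro p hp r hr hp1 hp2 hr1 hr2
    rcases List.mem_cons.1 hp with rfl | hpL <;> rcases List.mem_cons.1 hr with rfl | hrL
    · rfl
    · exact absurd hr2 (hlater r hrL hp1 hp2)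
    · exact absurd hp2 (hlater p hpL hr1 hr2)
    · exact ih h.2 p hpL r hrL hp1 hp2 hr1 hr2

/-- At most one force happens inside each clique of the cover. -/
theorem ncard_targets_le {ι : Type*} [Finite ι] (h : PSDValid G S L) (C : ι → Set V)
    (hcl : ∀ i, G.IsClique (C i))
    (hcover : ∀ u v, G.Adj u v → ∃ i, u ∈ C i ∧ v ∈ C i) :
    {v | ∃ p ∈ L, p.2 = v}.ncard ≤ Nat.card ι := by
  choose p hpL hpv using fun v : {v | ∃ p ∈ L, p.2 = v} => v.2
  choose f hf using fun v => hcover _ _ (h.adj (p v) (hpL v))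
  rw [← Nat.card_coe_set_eq]
  refine Nat.card_le_card_of_injective f fun v w hvw => Subtype.ext ?_
  have hvw' := h.eq_of_mem_isClique (hcl (f v)) (p v) (hpL v) (p w) (hpL w)
    (hf v).1 (hf v).2 (hvw ▸ (hf w).1) (hvw ▸ (hf w).2)
  rw [← hpv v, ← hpv w, hvw']

end PSDValid

theorem IsPSDForcingSet.card_le_ncard_add {ι : Type*} [Finite ι] {G : SimpleGraph V}
    {B : Set V} (hB : IsPSDForcingSet G B) (C : ι → Set V) (hcl : ∀ i, G.IsClique (C i))
    (hcover : ∀ u v, G.Adj u v → ∃ i, u ∈ C i ∧ v ∈ C i) :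
    Nat.card V ≤ B.ncard + Nat.card ι := by
  obtain ⟨L, hL, hall⟩ := hB
  rw [← Set.ncard_univ, ← hall, applyForces_eq_union]
  exact (Set.ncard_union_le _ _).trans (by gcongr; exact hL.ncard_targets_le C hcl hcover)

theorem ZFForce.psdForce {G : SimpleGraph V} {S : Set V} {u w : V} (h : ZFForce G S u w) :
    PSDForce G S u w :=
  ⟨h.1, h.2.1, h.2.2.1, fun x hx hxS _ => h.2.2.2 x hx hxS⟩

theorem ZFValid.psdValid {G : SimpleGraph V} : ∀ {S : Set V} {L : List (V × V)},
    ZFValid G S L → PSDValid G S L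
  | _, [], _ => trivial
  | _, _ :: _, h => ⟨h.1.psdForce, h.2.psdValid⟩

/-- Exactly one vertex of `B` forces, i.e. exactly one forcing tree is non-trivial. -/
def IsOneTreePSDProcess (G : SimpleGraph V) (B : Set V) (L : List (V × V)) : Prop :=
  PSDValid G B L ∧ applyForces B L = Set.univ ∧ ∃! b, b ∈ B ∧ ∃ w, (b, w) ∈ L

def IsInducedPath (G : SimpleGraph V) (q : ℕ → V) (n : ℕ) : Prop :=
  Set.InjOn q (Set.Iic n) ∧ ∀ i j, i < j → j ≤ n → (G.Adj (q i) (q j) ↔ j = i + 1)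

namespace IsInducedPath

variable {G : SimpleGraph V} {q : ℕ → V} {n : ℕ}

theorem zfForce (hq : IsInducedPath G q n) {j : ℕ} (hj : j < n) :
    ZFForce G (q '' Set.Ioc j n)ᶜ (q j) (q (j + 1)) := by
  refine ⟨?_, ?_, (hq.2 j (j + 1) j.lt_succ_self hj).2 rfl, ?_⟩
  · rintro ⟨t, ht, hqt⟩
    have := hq.1 (Set.Ioc_subset_Iic_self ht) (Set.mem_Iic.2 hj.le) hqt
    exact (Set.mem_Ioc.1 ht).1.ne' this
  · exact not_not.2 ⟨j + 1, Set.mem_Ioc.2 ⟨j.lt_succ_self, hj⟩, rfl⟩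
  · intro v hv hvS
    obtain ⟨t, ht, rfl⟩ := not_not.1 hvS
    rw [(hq.2 j t (Set.mem_Ioc.1 ht).1 (Set.mem_Ioc.1 ht).2).1 hv]

theorem zfValid (hq : IsInducedPath G q n) :
    ZFValid G (q '' Set.Ioc 0 n)ᶜ ((List.range n).map fun j => (q j, q (j + 1))) := by
  suffices h : ∀ m j, j + m = n →
      ZFValid G (q '' Set.Ioc j n)ᶜ ((List.range' j m).map fun j => (q j, q (j + 1))) by
    simpa [List.range_eq_range'] using h n 0 (zero_add n)
  intro m
  induction m with
  | zero => exact fun _ _ => trivial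
  | succ m ih =>
    intro j hjm
    refine ⟨hq.zfForce (by omega), ?_⟩
    have hIoc : Set.Ioc j n = insert (j + 1) (Set.Ioc (j + 1) n) := by
      ext t; simp only [Set.mem_Ioc, Set.mem_insert_iff]; omega
    have hnew : q (j + 1) ∉ q '' Set.Ioc (j + 1) n := fun ⟨t, ht, hqt⟩ =>
      (Set.mem_Ioc.1 ht).1.ne' (hq.1 (Set.Ioc_subset_Iic_self ht) (by simp; omega) hqt)
    have hblack : insert (q (j + 1)) (q '' Set.Ioc j n)ᶜ = (q '' Set.Ioc (j + 1) n)ᶜ := by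
      ext v
      rw [hIoc, Set.image_insert_eq]
      by_cases hv : v = q (j + 1)
      · simp [hv, hnew]
      · simp [hv]
    rw [hblack]
    exact ih (j + 1) (by omega)

theorem isOneTreePSDProcess (hq : IsInducedPath G q n) (hn : 0 < n) :
    IsOneTreePSDProcess G (q '' Set.Ioc 0 n)ᶜ ((List.range n).map fun j => (q j, q (j + 1))) := by
  have hroot : q 0 ∉ q '' Set.Ioc 0 n := fun ⟨t, ht, hqt⟩ =>
    (Set.mem_Ioc.1 ht).1.ne' (hq.1 (Set.Ioc_subset_Iic_self ht) (Set.mem_Iic.2 n.zero_le) hqt)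
  refine ⟨hq.zfValid.psdValid, ?_,
    ⟨q 0, ⟨hroot, q 1, List.mem_map.2 ⟨0, List.mem_range.2 hn, rfl⟩⟩, ?_⟩⟩
  · rw [applyForces_eq_union, Set.eq_univ_iff_forall]
    intro v
    by_cases hv : v ∈ q '' Set.Ioc 0 n
    · obtain ⟨t, ht, rfl⟩ := hv
      obtain ⟨j, rfl⟩ : ∃ j, t = j + 1 := ⟨t - 1, by have := (Set.mem_Ioc.1 ht).1; omega⟩
      exact Or.inr ⟨_, List.mem_map.2 ⟨j, List.mem_range.2 (Set.mem_Ioc.1 ht).2, rfl⟩, rfl⟩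
    · exact Or.inl hv
  · rintro b ⟨hb, w, hbw⟩
    obtain ⟨j, hj, hjb⟩ := List.mem_map.1 hbw
    obtain rfl := congrArg Prod.fst hjb
    rcases Nat.eq_zero_or_pos j with rfl | hj0
    · rfl
    · exact absurd ⟨j, Set.mem_Ioc.2 ⟨hj0, (List.mem_range.1 hj).le⟩, rfl⟩ hb

theorem ncard_image_Ioc (hq : IsInducedPath G q n) : (q '' Set.Ioc 0 n).ncard = n := by
  rw [(hq.1.mono Set.Ioc_subset_Iic_self).ncard_image, Set.ncard_Ioc_nat, Nat.sub_zero]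

end IsInducedPath

/-- `d` is the centre of an induced claw with leaves `r`, `x`, `y`: `r` forces `d`, which then
forces `x` and `y` since they lie in different components of the white subgraph. -/
theorem isOneTreePSDProcess_of_claw {G : SimpleGraph V} {d r x y : V}
    (hdr : G.Adj d r) (hdx : G.Adj d x) (hdy : G.Adj d y)
    (hrx : ¬G.Adj r x) (hry : ¬G.Adj r y) (hxy : ¬G.Adj x y)
    (hrx' : r ≠ x) (hry' : r ≠ y) (hxy' : x ≠ y) :
    IsOneTreePSDProcess G {d, x, y}ᶜ [(r, d), (d, x), (d, y)] := by
  have hr : r ∈ ({d, x, y} : Set V)ᶜ := by simp [hdr.ne.symm, hrx', hry']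
  have hd : insert d ({d, x, y} : Set V)ᶜ = {x, y}ᶜ := by
    ext v; by_cases hv : v = d <;> simp [hv, hdx.ne, hdy.ne]
  have hx : insert x ({x, y} : Set V)ᶜ = {y}ᶜ := by
    ext v; by_cases hv : v = x <;> simp [hv, hxy']
  refine ⟨⟨?_, ?_, ?_, trivial⟩, ?_, ⟨r, ⟨hr, d, by simp⟩, ?_⟩⟩
  · refine ZFForce.psdForce ⟨hr, by simp, hdr.symm, fun v hv hvS => ?_⟩
    obtain rfl | rfl | rfl := Set.notMem_compl_iff.1 hvS
    exacts [rfl, absurd hv hrx, absurd hv hry]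
  · show PSDForce G (insert d _) d x
    rw [hd]
    refine ⟨by simp [hdx.ne, hdy.ne], by simp, hdx, fun v _ hvS hconn => ?_⟩
    obtain rfl | rfl := Set.notMem_compl_iff.1 hvS
    · rfl
    rcases Relation.ReflTransGen.cases_head hconn with hvx | ⟨c, ⟨-, hc, hvc⟩, -⟩
    · exact hvx
    obtain rfl | rfl := Set.notMem_compl_iff.1 hc
    exacts [absurd hvc.symm hxy, (hvc.ne rfl).elim]
  · show PSDForce G (insert x (insert d _)) d y
    rw [hd, hx]
    exact ZFForce.psdForce
      ⟨by simp [hdy.ne], by simp, hdy, fun v _ hvS => Set.notMem_compl_iff.1 hvS⟩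
  · rw [applyForces_eq_union, Set.eq_univ_iff_forall]
    intro v
    by_cases hv : v = d ∨ v = x ∨ v = y
    · rcases hv with rfl | rfl | rfl <;> simp
    · simp_all
  · rintro b ⟨hb, w, hbw⟩
    simp only [List.mem_cons, Prod.mk.injEq, List.not_mem_nil, or_false] at hbw
    rcases hbw with ⟨rfl, -⟩ | ⟨rfl, -⟩ | ⟨rfl, -⟩
    · rfl
    all_goals simp at hb

theorem ZMod.bijOn_natCast_Icc (k : ℕ) [NeZero k] :
    Set.BijOn (Nat.cast : ℕ → ZMod k) (Set.Icc 1 k) Set.univ := by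
  refine ⟨Set.mapsTo_univ _ _, fun a ⟨ha1, ha2⟩ b ⟨hb1, hb2⟩ h => ?_, fun m _ => ?_⟩
  · rw [ZMod.natCast_eq_natCast_iff'] at h
    rcases ha2.lt_or_eq with ha2 | rfl <;> rcases hb2.lt_or_eq with hb2 | rfl <;>
      simp only [Nat.mod_eq_of_lt, Nat.mod_self, *] at h <;> omega
  · by_cases hm : m = 0
    · exact ⟨k, ⟨NeZero.one_le, le_rfl⟩, by rw [ZMod.natCast_self, hm]⟩
    · exact ⟨m.val, ⟨ZMod.val_pos.2 hm, (ZMod.val_lt m).le⟩, ZMod.natCast_zmod_val m⟩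

theorem adj_iff_of_isClique_cover {ι : Type*} {G : SimpleGraph V} {C : ι → Set V}
    (hcl : ∀ i, G.IsClique (C i)) (hcover : ∀ u v, G.Adj u v → ∃ i, u ∈ C i ∧ v ∈ C i)
    {u v : V} : G.Adj u v ↔ u ≠ v ∧ ∃ i, u ∈ C i ∧ v ∈ C i :=
  ⟨fun h => ⟨h.ne, hcover u v h⟩, fun ⟨hne, i, hu, hv⟩ => hcl i hu hv hne⟩

/-- Each `C m` is labelled by the unique `a ∈ [1, k]` with `(a : ZMod k) = m`; two vertices
`q i`, `q j` are adjacent iff their label sets `{i, i + 1} ∩ [1, k]` and `{j, j + 1} ∩ [1, k]`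
meet. -/
theorem isInducedPath_of_mem_iff {k : ℕ} (hk : 2 ≤ k) {G : SimpleGraph V}
    {C : ZMod k → Set V} (hcl : ∀ i, G.IsClique (C i))
    (hcover : ∀ u v, G.Adj u v → ∃ i, u ∈ C i ∧ v ∈ C i) {q : ℕ → V}
    (hq : ∀ j ≤ k, ∀ a ∈ Set.Icc 1 k, q j ∈ C a ↔ a = j ∨ a = j + 1) :
    IsInducedPath G q k := by
  have : NeZero k := ⟨by omega⟩
  have hsep : ∀ i j, i < j → j ≤ k → q i ≠ q j := by
    intro i j hij hj heq
    have hji : j = i + 1 := by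
      have := (hq i (by omega) j ⟨by omega, hj⟩).1
        (heq ▸ (hq j hj j ⟨by omega, hj⟩).2 (.inl rfl))
      omega
    subst hji
    rcases Nat.eq_zero_or_pos i with rfl | hi
    · have := (hq 0 (by omega) 2 ⟨by omega, hk⟩).1
        (heq ▸ (hq 1 hj 2 ⟨by omega, hk⟩).2 (.inr rfl))
      omega
    · have := (hq (i + 1) hj i ⟨hi, by omega⟩).1
        (heq ▸ (hq i (by omega) i ⟨hi, by omega⟩).2 (.inl rfl))
      omega
  refine ⟨fun i hi j hj heq => ?_, fun i j hij hj => ?_⟩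
  · rw [Set.mem_Iic] at hi hj
    rcases lt_trichotomy i j with h | h | h
    exacts [absurd heq (hsep i j h hj), h, absurd heq.symm (hsep j i h hi)]
  · rw [adj_iff_of_isClique_cover hcl hcover, and_iff_right (hsep i j hij hj)]
    constructor
    · rintro ⟨m, hi, hj'⟩
      obtain ⟨a, ha, rfl⟩ := (ZMod.bijOn_natCast_Icc k).surjOn (Set.mem_univ m)
      have := (hq i (by omega) a ha).1 hi
      have := (hq j hj a ha).1 hj'
      omega
    · rintro rfl
      exact ⟨_, (hq i (by omega) (i + 1) ⟨by omega, hj⟩).2 (.inr rfl),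
        (hq (i + 1) hj (i + 1) ⟨by omega, hj⟩).2 (.inl rfl)⟩

theorem exists_isOneTreePSDProcess_of_path {k : ℕ} (hk : 2 ≤ k) {G : SimpleGraph V}
    {C : ZMod k → Set V} (hcl : ∀ i, G.IsClique (C i))
    (hcover : ∀ u v, G.Adj u v → ∃ i, u ∈ C i ∧ v ∈ C i) {x y : V}
    (hx : ∀ m, x ∈ C m ↔ m = 1) (hy : ∀ m, y ∈ C m ↔ m = 0) {e : ℕ → V}
    (he : ∀ j, 0 < j → j < k → ∀ m, e j ∈ C m ↔ m = j ∨ m = j + 1) :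
    ∃ W : Set V, W.ncard = k ∧ ∃ L, IsOneTreePSDProcess G Wᶜ L := by
  have : NeZero k := ⟨by omega⟩
  have hcast : ∀ a ∈ Set.Icc 1 k, ∀ b ∈ Set.Icc 1 k, (a : ZMod k) = b ↔ a = b :=
    fun a ha b hb => (ZMod.bijOn_natCast_Icc k).injOn.eq_iff ha hb
  set q : ℕ → V := fun j => if j = 0 then x else if j = k then y else e j
  have hq : ∀ j ≤ k, ∀ a ∈ Set.Icc 1 k, q j ∈ C a ↔ a = j ∨ a = j + 1 := by
    intro j hj a ha
    have ha' := Set.mem_Icc.1 ha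
    by_cases hj0 : j = 0
    · rw [show q j = x from if_pos hj0, hx, ← Nat.cast_one, hcast a ha 1 ⟨le_rfl, by omega⟩]
      omega
    by_cases hjk : j = k
    · rw [show q j = y by simp [q, hjk, NeZero.ne k], hy, ← ZMod.natCast_self k,
        hcast a ha k ⟨by omega, le_rfl⟩]
      omega
    · rw [show q j = e j by simp [q, hj0, hjk], he j (by omega) (by omega), ← Nat.cast_succ,
        hcast a ha j ⟨by omega, hj⟩, hcast a ha (j + 1) ⟨by omega, by omega⟩]
  have hpath := isInducedPath_of_mem_iff hk hcl hcover hq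
  exact ⟨_, hpath.ncard_image_Ioc, _, hpath.isOneTreePSDProcess (by omega)⟩

namespace IsCycleOfCliques

variable {G : SimpleGraph V} {k : ℕ} {C : ZMod k → Set V}

/-- A third clique through `v` would be consecutive to both `C j` and `C (j + 1)`, forcing
`3 = 0` in `ZMod k`. -/
theorem mem_iff_of_mem_of_mem_add_one (hC : IsCycleOfCliques G k C) (hk : 4 ≤ k) {v : V}
    {j : ZMod k} (hj : v ∈ C j) (hj' : v ∈ C (j + 1)) (m : ZMod k) :
    v ∈ C m ↔ m = j ∨ m = j + 1 := by
  refine ⟨fun hm => ?_, by rintro (rfl | rfl) <;> assumption⟩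
  by_contra! hne
  have h₁ := (hC.2.2.2 m j hne.1).1 ⟨v, hm, hj⟩
  have h₂ := (hC.2.2.2 m (j + 1) hne.2).1 ⟨v, hm, hj'⟩
  have h₃ : ((3 : ℕ) : ZMod k) = 0 := by
    rcases h₁ with h₁ | h₁
    · rcases h₂ with h₂ | h₂
      · exact absurd (by linear_combination -h₂) hne.1
      · push_cast; linear_combination -h₁ - h₂
    · exact absurd h₁ hne.2
  have := Nat.le_of_dvd (by norm_num) ((ZMod.natCast_eq_zero_iff 3 k).1 h₃)
  omega

theorem exists_mem_inter_add_one (hC : IsCycleOfCliques G k C) (hk : 2 ≤ k) (j : ZMod k) :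
    ∃ v, v ∈ C j ∧ v ∈ C (j + 1) := by
  refine (hC.2.2.2 j (j + 1) fun h => ?_).2 (.inl rfl)
  have := Nat.le_of_dvd one_pos ((ZMod.natCast_eq_zero_iff 1 k).1 (by
    push_cast; linear_combination -h))
  omega

end IsCycleOfCliques

theorem IsMaxClique.exists_mem_notMem {G : SimpleGraph V} {C D : Set V} (hC : IsMaxClique G C)
    (hD : G.IsClique D) (hne : C ≠ D) : ∃ r ∈ C, r ∉ D := by
  by_contra! h
  exact hne (hC.2 D hD h)

theorem exists_isOneTreePSDProcess_of_star {G : SimpleGraph V} {C : ZMod 3 → Set V}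
    (hcl : ∀ i, G.IsClique (C i)) (hcover : ∀ u v, G.Adj u v → ∃ i, u ∈ C i ∧ v ∈ C i)
    {x y d r : V} (hx : ∀ m, x ∈ C m ↔ m = 1) (hy : ∀ m, y ∈ C m ↔ m = 0)
    (hd : ∀ m, d ∈ C m) (hr : ∀ m, r ∈ C m ↔ m = 2) :
    ∃ W : Set V, W.ncard = 3 ∧ ∃ L, IsOneTreePSDProcess G Wᶜ L := by
  have hsep : ∀ {u v : V} {a b : ZMod 3}, (∀ m, u ∈ C m ↔ m = a) →
      (∀ m, v ∈ C m ↔ m = b) → a ≠ b → u ≠ v ∧ ¬G.Adj u v := by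
    intro u v a b hu hv hab
    refine ⟨fun huv => hab ((hv a).1 (huv ▸ (hu a).2 rfl)), fun huv => ?_⟩
    obtain ⟨m, hum, hvm⟩ := hcover u v huv
    exact hab (((hu m).1 hum).symm.trans ((hv m).1 hvm))
  have hadj : ∀ {u : V} {a : ZMod 3}, (∀ m, u ∈ C m ↔ m = a) → G.Adj d u := by
    intro u a hu
    refine hcl a (hd a) ((hu a).2 rfl) fun hdu => ?_
    have : ∀ a : ZMod 3, a + 1 ≠ a := by decide
    exact this a ((hu (a + 1)).1 (hdu ▸ hd (a + 1)))
  obtain ⟨hrx', hrx⟩ := hsep hr hx (by decide)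
  obtain ⟨hry', hry⟩ := hsep hr hy (by decide)
  obtain ⟨hxy', hxy⟩ := hsep hx hy (by decide)
  refine ⟨{d, x, y}, ?_, _, isOneTreePSDProcess_of_claw (hadj hr) (hadj hx) (hadj hy)
    hrx hry hxy hrx' hry' hxy'⟩
  rw [Set.ncard_insert_of_notMem (by simp [(hadj hx).ne, (hadj hy).ne]), Set.ncard_pair hxy']

namespace IsCycleOfCliques

variable {G : SimpleGraph V} {k : ℕ} {C : ZMod k → Set V}

/-- With three cliques, either `C 1 ∩ C 2` and `C 2 ∩ C 0` both contain a vertex lying in no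
other clique, giving an induced path from `x` to `y`, or some vertex lies in all three
cliques and is the centre of an induced claw. -/
theorem exists_isOneTreePSDProcess_three {C : ZMod 3 → Set V} (hC : IsCycleOfCliques G 3 C)
    {x y : V} (hx : ∀ m, x ∈ C m ↔ m = 1) (hy : ∀ m, y ∈ C m ↔ m = 0) :
    ∃ W : Set V, W.ncard = 3 ∧ ∃ L, IsOneTreePSDProcess G Wᶜ L := by
  have hcl : ∀ i, G.IsClique (C i) := fun i => (hC.2.1 i).1
  have hZ : ∀ m : ZMod 3, m = 0 ∨ m = 1 ∨ m = 2 := by decide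
  have hdiff : ∀ i j : ZMod 3, i ≠ j → ∃ r ∈ C i, r ∉ C j := fun i j hij =>
    (hC.2.1 i).exists_mem_notMem (hcl j) (hC.1.ne hij)
  have hmeet : ∀ i j : ZMod 3, i ≠ j → (C i ∩ C j).Nonempty := fun i j hij =>
    (hC.2.2.2 i j hij).2 (by revert i j; decide)
  by_cases hA : C 1 ∩ C 2 ⊆ C 0
  · obtain ⟨d, hd1, hd2⟩ := hmeet 1 2 (by decide)
    obtain ⟨r, hr2, hr0⟩ := hdiff 2 0 (by decide)
    refine exists_isOneTreePSDProcess_of_star hcl hC.2.2.1 hx hy (d := d) (r := r)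
      (fun m => ?_) (fun m => ?_) <;> obtain rfl | rfl | rfl := hZ m
    exacts [hA ⟨hd1, hd2⟩, hd1, hd2, iff_of_false hr0 (by decide),
      iff_of_false (fun hr1 => hr0 (hA ⟨hr1, hr2⟩)) (by decide), iff_of_true hr2 rfl]
  by_cases hB : C 2 ∩ C 0 ⊆ C 1
  · obtain ⟨d, hd2, hd0⟩ := hmeet 2 0 (by decide)
    obtain ⟨r, hr2, hr1⟩ := hdiff 2 1 (by decide)
    refine exists_isOneTreePSDProcess_of_star hcl hC.2.2.1 hx hy (d := d) (r := r)
      (fun m => ?_) (fun m => ?_) <;> obtain rfl | rfl | rfl := hZ m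
    exacts [hd0, hB ⟨hd2, hd0⟩, hd2,
      iff_of_false (fun hr0 => hr1 (hB ⟨hr2, hr0⟩)) (by decide),
      iff_of_false hr1 (by decide), iff_of_true hr2 rfl]
  obtain ⟨d₁, ⟨hd₁1, hd₁2⟩, hd₁0⟩ := Set.not_subset.1 hA
  obtain ⟨d₂, ⟨hd₂2, hd₂0⟩, hd₂1⟩ := Set.not_subset.1 hB
  refine exists_isOneTreePSDProcess_of_path (by norm_num) hcl hC.2.2.1 hx hy
    (e := fun j => if j = 1 then d₁ else d₂) fun j hj0 hj3 m => ?_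
  interval_cases j <;> obtain rfl | rfl | rfl := hZ m
  exacts [iff_of_false hd₁0 (by decide), iff_of_true hd₁1 (by decide),
    iff_of_true hd₁2 (by decide), iff_of_true hd₂0 (by decide),
    iff_of_false hd₂1 (by decide), iff_of_true hd₂2 (by decide)]

theorem exists_isOneTreePSDProcess (hC : IsCycleOfCliques G k C) (hk : 3 ≤ k) {x y : V}
    (hx : ∀ m, x ∈ C m ↔ m = 1) (hy : ∀ m, y ∈ C m ↔ m = 0) :
    ∃ W : Set V, W.ncard = k ∧ ∃ L, IsOneTreePSDProcess G Wᶜ L := by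
  obtain rfl | hk := hk.eq_or_lt
  · exact hC.exists_isOneTreePSDProcess_three hx hy
  choose e he using hC.exists_mem_inter_add_one (by omega)
  exact exists_isOneTreePSDProcess_of_path (by omega) (fun i => (hC.2.1 i).1) hC.2.2.1 hx hy
    (e := fun j => e j) fun j _ _ => hC.mem_iff_of_mem_of_mem_add_one hk (he j).1 (he j).2

end IsCycleOfCliques

/-- Let `G` be a cycle of cliques `C 1, …, C k` (`k ≥ 3`) with a
vertex `x ∈ C 1` in no other clique and a vertex `y ∈ C 0` (the clique `C k`) in no
other clique. Then `Z₊(G) = |V(G)| − k` and there is an optimal positive zero forcing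
set of that size admitting a positive zero forcing process with exactly one non-trivial
forcing tree. -/
theorem cycleOfCliques_psd_one_tree {V : Type*} [Fintype V] (G : SimpleGraph V)
    (k : ℕ) (hk : 3 ≤ k) (C : ZMod k → Set V) (hC : IsCycleOfCliques G k C)
    (x y : V) (hx : x ∈ C 1) (hx' : ∀ i : ZMod k, i ≠ 1 → x ∉ C i)
    (hy : y ∈ C 0) (hy' : ∀ i : ZMod k, i ≠ 0 → y ∉ C i) :
    psdNum G = Fintype.card V - k ∧
      ∃ (B : Set V) (L : List (V × V)), B.ncard = Fintype.card V - k ∧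
        PSDValid G B L ∧ applyForces B L = Set.univ ∧
        (∃! b, b ∈ B ∧ ∃ w, (b, w) ∈ L) := by
  have : NeZero k := ⟨by omega⟩
  obtain ⟨W, hW, L, hL⟩ := hC.exists_isOneTreePSDProcess hk
    (fun m => ⟨fun h => by_contra fun hm => hx' m hm h, fun h => h ▸ hx⟩)
    (fun m => ⟨fun h => by_contra fun hm => hy' m hm h, fun h => h ▸ hy⟩)
  have hB : Wᶜ.ncard = Fintype.card V - k := by
    rw [Set.ncard_compl, hW, Nat.card_eq_fintype_card]
  have hleast : IsLeast {n | ∃ B : Set V, B.ncard = n ∧ IsPSDForcingSet G B}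
      (Fintype.card V - k) := by
    refine ⟨⟨Wᶜ, hB, L, hL.1, hL.2.1⟩, ?_⟩
    rintro _ ⟨B, rfl, hB⟩
    have := hB.card_le_ncard_add C (fun i => (hC.2.1 i).1) hC.2.2.1
    rw [Nat.card_zmod, Nat.card_eq_fintype_card] at this
    omega
  exact ⟨hleast.csInf_eq, Wᶜ, L, hB, hL⟩
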